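/- The map t^a − t^b ↦ t^{D(a)} − t^{D(b)} induces a bijection between the set of binomials t^a − t^b in the toric ideal P whose terms t^a and t^b have disjoint support and the set of binomials t^{a′} − t^{b′} in the vanishing ideal I(X) whose terms t^{a′} and t^{b′} have disjoint support, where D: ℤ^n → ℤ^n is the ℤ-linear map with D(e_i) = d_i e_i. -/

import Mathlib

/-!
Write `D a = (d_i a_i)_i`. The substitution `t_i ↦ t_i ^ d_i` is injective and sends `t^a - t^b`
to `t^{D a} - t^{D b}`, and `t^a - t^b ∈ P` iff `∑ d_i a_i = ∑ d_i b_i`. On the other side, a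
binomial `t^a - t^b` with disjoint supports lies in `I(X)` iff it is homogeneous and every `d_i`
divides `a_i` and `b_i`. Indeed `I(X)` is a homogeneous ideal whose elements vanish at
`(1, …, 1)`, which forces homogeneity; evaluating at the point with `β` in coordinate `i` and `1`
elsewhere gives `a_i ≡ b_i (mod d_i)`; conversely, since `β` generates `K^*`, every `x ∈ K^*`
satisfies `(x ^ v_i) ^ d_i = 1`, so such a binomial vanishes on `X`. Hence both sets consist of
the binomials `t^{D a} - t^{D b}` with disjoint supports and `∑ d_i a_i = ∑ d_i b_i`.
-/
open MvPolynomial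

theorem pow_pow_orderOf_pow_eq_one {G : Type*} [Group G] {β : G}
    (hβ : ∀ x : G, x ∈ Subgroup.zpowers β) (x : G) (k : ℕ) :
    (x ^ k) ^ orderOf (β ^ k) = 1 := by
  obtain ⟨m, rfl⟩ := hβ x
  refine orderOf_dvd_iff_pow_eq_one.mp (orderOf_dvd_of_mem_zpowers ⟨m, ?_⟩)
  simp only [← zpow_natCast, ← zpow_mul, mul_comm]

namespace MvPolynomial

variable {σ R : Type*}

section Expand

variable [CommSemiring R] (d : σ → ℕ)

-- `d • u` is the pointwise product `(d i * u i)_i` (`Finsupp.pointwiseScalar`), i.e. `D u`.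
theorem aeval_X_pow_monomial (u : σ →₀ ℕ) (r : R) :
    aeval (fun i => (X i : MvPolynomial σ R) ^ d i) (monomial u r) = monomial (d • u) r := by
  have hsupp : (d • u).support ⊆ u.support := fun i hi => by
    simp only [Finsupp.mem_support_iff, Finsupp.coe_pointwise_smul, smul_eq_mul] at hi ⊢
    exact right_ne_zero_of_mul hi
  rw [aeval_monomial, monomial_eq, algebraMap_eq,
    Finsupp.prod_of_support_subset _ hsupp _ fun i _ => pow_zero _]
  simp [Finsupp.prod, pow_mul]

theorem coeff_aeval_X_pow_smul (hd : ∀ i, d i ≠ 0) (φ : MvPolynomial σ R) (m : σ →₀ ℕ) :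
    (aeval (fun i => (X i : MvPolynomial σ R) ^ d i) φ).coeff (d • m) = φ.coeff m := by
  classical
  have smul_inj : Function.Injective (d • · : (σ →₀ ℕ) → σ →₀ ℕ) := fun u w h =>
    Finsupp.ext fun i => Nat.eq_of_mul_eq_mul_left (Nat.pos_of_ne_zero (hd i))
      (DFunLike.congr_fun h i)
  induction φ using induction_on' with
  | monomial u r => simp only [aeval_X_pow_monomial, coeff_monomial, smul_inj.eq_iff]
  | add p q hp hq => rw [map_add, coeff_add, coeff_add, hp, hq]

theorem aeval_X_pow_injective (hd : ∀ i, d i ≠ 0) :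
    Function.Injective (aeval (R := R) fun i => (X i : MvPolynomial σ R) ^ d i) := by
  intro φ ψ h
  ext m
  rw [← coeff_aeval_X_pow_smul d hd, h, coeff_aeval_X_pow_smul d hd]

theorem aeval_X_pow_prod_X_pow [Fintype σ] (a : σ → ℕ) :
    aeval (fun i => (X i : MvPolynomial σ R) ^ d i) (∏ i, X i ^ a i : MvPolynomial σ R) =
      ∏ i, X i ^ (d i * a i) := by
  simp only [map_prod, map_pow, aeval_X, pow_mul]

end Expand

section Toric

variable [Fintype σ]

theorem aeval_X_pow_prod_X_pow_eq_X_pow_sum [CommSemiring R] (d a : σ → ℕ) :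
    aeval (fun i => (Polynomial.X : Polynomial R) ^ d i) (∏ i, (X i : MvPolynomial σ R) ^ a i)
      = Polynomial.X ^ ∑ i, d i * a i := by
  simp only [map_prod, map_pow, aeval_X, ← pow_mul, Finset.prod_pow_eq_pow_sum]

theorem prod_X_pow_sub_prod_X_pow_mem_ker_aeval_X_pow_iff [CommRing R] [Nontrivial R]
    (d a b : σ → ℕ) :
    (∏ i, (X i : MvPolynomial σ R) ^ a i) - ∏ i, X i ^ b i ∈
        RingHom.ker (aeval (fun i => (Polynomial.X : Polynomial R) ^ d i) :
          MvPolynomial σ R →ₐ[R] Polynomial R) ↔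
      ∑ i, d i * a i = ∑ i, d i * b i := by
  rw [RingHom.mem_ker, map_sub, sub_eq_zero, aeval_X_pow_prod_X_pow_eq_X_pow_sum,
    aeval_X_pow_prod_X_pow_eq_X_pow_sum]
  exact ⟨fun h => by simpa using congrArg Polynomial.natDegree h, fun h => by rw [h]⟩

end Toric

theorem isHomogeneous_prod_X_pow [CommSemiring R] [Fintype σ] (a : σ → ℕ) :
    (∏ i, X i ^ a i : MvPolynomial σ R).IsHomogeneous (∑ i, a i) :=
  IsHomogeneous.prod _ _ _ fun i _ => isHomogeneous_X_pow i (a i)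

variable (R) in
noncomputable def degenerateTorusVanishingIdeal [CommRing R] (v : σ → ℕ) :
    Ideal (MvPolynomial σ R) :=
  Ideal.span {f | (∃ e, f.IsHomogeneous e) ∧
    ∀ x : σ → Rˣ, eval (fun i => (x i : R) ^ v i) f = 0}

section VanishingIdeal

attribute [local instance] MvPolynomial.gradedAlgebra

variable [CommRing R] {v : σ → ℕ}

theorem eval_eq_zero_of_mem_degenerateTorusVanishingIdeal {f : MvPolynomial σ R}
    (hf : f ∈ degenerateTorusVanishingIdeal R v) (x : σ → Rˣ) :
    eval (fun i => (x i : R) ^ v i) f = 0 :=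
  (Ideal.span_le.mpr fun _ hg => hg.2 x : _ ≤ RingHom.ker (eval _)) hf

theorem isHomogeneous_degenerateTorusVanishingIdeal :
    (degenerateTorusVanishingIdeal R v).IsHomogeneous (homogeneousSubmodule σ R) :=
  Ideal.homogeneous_span _ _ fun f hf =>
    hf.1.imp fun e he => (mem_homogeneousSubmodule e f).2 he

variable [Fintype σ] {a b : σ → ℕ}

theorem sum_eq_sum_of_prod_X_pow_sub_mem_degenerateTorusVanishingIdeal [Nontrivial R]
    (h : (∏ i, X i ^ a i : MvPolynomial σ R) - ∏ i, X i ^ b i ∈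
      degenerateTorusVanishingIdeal R v) :
    ∑ i, a i = ∑ i, b i := by
  by_contra hab
  -- the component of degree `∑ i, a i` is the monomial `t^a`, which does not vanish at `(1, …, 1)`
  have hcomp := homogeneousComponent_mem_of_mem isHomogeneous_degenerateTorusVanishingIdeal h
    (∑ i, a i)
  rw [map_sub, homogeneousComponent_of_mem (isHomogeneous_prod_X_pow a),
    homogeneousComponent_of_mem (isHomogeneous_prod_X_pow b), if_pos rfl, if_neg hab,
    sub_zero] at hcomp
  simpa using eval_eq_zero_of_mem_degenerateTorusVanishingIdeal hcomp 1

theorem modEq_of_prod_X_pow_sub_mem_degenerateTorusVanishingIdeal (β : Rˣ)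
    (h : (∏ i, X i ^ a i : MvPolynomial σ R) - ∏ i, X i ^ b i ∈
      degenerateTorusVanishingIdeal R v) (i : σ) :
    a i ≡ b i [MOD orderOf (β ^ v i)] := by
  classical
  have eval_eq : ∀ c : σ → ℕ, eval (fun j => ((Pi.mulSingle i β : σ → Rˣ) j : R) ^ v j)
      (∏ j, X j ^ c j) = ((β ^ v i) ^ c i : Rˣ) := fun c => by
    rw [map_prod, Finset.prod_eq_single i (fun j _ hj => by simp [hj]) (by simp)]
    simp
  have h := eval_eq_zero_of_mem_degenerateTorusVanishingIdeal h (Pi.mulSingle i β)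
  rw [map_sub, sub_eq_zero, eval_eq, eval_eq] at h
  exact pow_eq_pow_iff_modEq.mp (Units.ext h)

theorem prod_X_pow_sub_mem_degenerateTorusVanishingIdeal_of_dvd {β : Rˣ}
    (hβ : ∀ x : Rˣ, x ∈ Subgroup.zpowers β) (hsum : ∑ i, a i = ∑ i, b i)
    (ha : ∀ i, orderOf (β ^ v i) ∣ a i) (hb : ∀ i, orderOf (β ^ v i) ∣ b i) :
    (∏ i, X i ^ a i : MvPolynomial σ R) - ∏ i, X i ^ b i ∈ degenerateTorusVanishingIdeal R v := by
  refine Ideal.subset_span ⟨⟨∑ i, a i,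
    (isHomogeneous_prod_X_pow a).sub (hsum ▸ isHomogeneous_prod_X_pow b)⟩, fun x => ?_⟩
  have eval_eq_one : ∀ c : σ → ℕ, (∀ i, orderOf (β ^ v i) ∣ c i) →
      eval (fun i => (x i : R) ^ v i) (∏ i, X i ^ c i) = 1 := fun c hc => by
    refine (map_prod _ _ _).trans (Finset.prod_eq_one fun i _ => ?_)
    obtain ⟨k, hk⟩ := hc i
    rw [map_pow, eval_X, hk, pow_mul, ← Units.val_pow_eq_pow_val, ← Units.val_pow_eq_pow_val,
      pow_pow_orderOf_pow_eq_one hβ, Units.val_one, one_pow]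
  rw [map_sub, eval_eq_one a ha, eval_eq_one b hb, sub_self]

theorem prod_X_pow_sub_mem_degenerateTorusVanishingIdeal_iff [Nontrivial R] {β : Rˣ}
    (hβ : ∀ x : Rˣ, x ∈ Subgroup.zpowers β) (hab : ∀ i, a i = 0 ∨ b i = 0) :
    (∏ i, X i ^ a i : MvPolynomial σ R) - ∏ i, X i ^ b i ∈ degenerateTorusVanishingIdeal R v ↔
      ∑ i, a i = ∑ i, b i ∧ ∀ i, orderOf (β ^ v i) ∣ a i ∧ orderOf (β ^ v i) ∣ b i := by
  refine ⟨fun h =>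
      ⟨sum_eq_sum_of_prod_X_pow_sub_mem_degenerateTorusVanishingIdeal h, fun i => ?_⟩,
    fun ⟨hsum, hdvd⟩ => prod_X_pow_sub_mem_degenerateTorusVanishingIdeal_of_dvd hβ hsum
      (fun i => (hdvd i).1) fun i => (hdvd i).2⟩
  have hmod := modEq_of_prod_X_pow_sub_mem_degenerateTorusVanishingIdeal β h i
  rcases hab i with h0 | h0 <;> rw [h0] at hmod ⊢
  · exact ⟨dvd_zero _, Nat.modEq_zero_iff_dvd.1 hmod.symm⟩
  · exact ⟨Nat.modEq_zero_iff_dvd.1 hmod, dvd_zero _⟩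

end VanishingIdeal

end MvPolynomial

theorem binomial_bijection_toric_to_vanishing_general
    (K : Type) [Field K] [Fintype K] (n : ℕ)
    (v : Fin n → ℕ)
    (β : Kˣ) (hβ : ∀ x : Kˣ, x ∈ Subgroup.zpowers β)
    (d : Fin n → ℕ) (hd : ∀ i, d i = orderOf (β ^ v i))
    (IX : Ideal (MvPolynomial (Fin n) K))
    (hIX : IX = Ideal.span {f : MvPolynomial (Fin n) K |
      (∃ e, f.IsHomogeneous e) ∧
      ∀ x : Fin n → Kˣ, eval (fun i => (x i : K) ^ v i) f = 0})
    (P : Ideal (MvPolynomial (Fin n) K))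
    (hP : P = RingHom.ker (aeval (fun i : Fin n => (Polynomial.X : Polynomial K) ^ d i) :
      MvPolynomial (Fin n) K →ₐ[K] Polynomial K)) :
    Set.BijOn (fun f => aeval (fun j : Fin n => (X j : MvPolynomial (Fin n) K) ^ d j) f)
      {f : MvPolynomial (Fin n) K | f ∈ P ∧ ∃ a b : Fin n → ℕ,
        (∀ i, a i = 0 ∨ b i = 0) ∧ f = (∏ i, X i ^ a i) - ∏ i, X i ^ b i}
      {f : MvPolynomial (Fin n) K | f ∈ IX ∧ ∃ a' b' : Fin n → ℕ,
        (∀ i, a' i = 0 ∨ b' i = 0) ∧ f = (∏ i, X i ^ a' i) - ∏ i, X i ^ b' i} := by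
  change IX = degenerateTorusVanishingIdeal K v at hIX
  subst hIX hP
  have hd0 : ∀ i, d i ≠ 0 := fun i => hd i ▸ (orderOf_pos _).ne'
  refine ⟨?_, (aeval_X_pow_injective d hd0).injOn, ?_⟩
  · rintro _ ⟨hP, a, b, hab, rfl⟩
    have hDab : ∀ i, d i * a i = 0 ∨ d i * b i = 0 := fun i =>
      (hab i).imp (fun h => by rw [h, mul_zero]) fun h => by rw [h, mul_zero]
    rw [prod_X_pow_sub_prod_X_pow_mem_ker_aeval_X_pow_iff] at hP
    simp only [map_sub, aeval_X_pow_prod_X_pow]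
    refine ⟨?_, _, _, hDab, rfl⟩
    rw [prod_X_pow_sub_mem_degenerateTorusVanishingIdeal_iff hβ hDab]
    exact ⟨hP, fun i => hd i ▸ ⟨dvd_mul_right _ _, dvd_mul_right _ _⟩⟩
  · rintro _ ⟨hI, a, b, hab, rfl⟩
    obtain ⟨hsum, hdvd⟩ := (prod_X_pow_sub_mem_degenerateTorusVanishingIdeal_iff hβ hab).1 hI
    choose a₀ ha₀ using fun i => hd i ▸ (hdvd i).1
    choose b₀ hb₀ using fun i => hd i ▸ (hdvd i).2
    obtain rfl : a = fun i => d i * a₀ i := funext ha₀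
    obtain rfl : b = fun i => d i * b₀ i := funext hb₀
    refine ⟨_, ⟨?_, a₀, b₀, fun i => (hab i).imp (mul_eq_zero.1 · |>.resolve_left (hd0 i))
      (mul_eq_zero.1 · |>.resolve_left (hd0 i)), rfl⟩, ?_⟩
    · exact (prod_X_pow_sub_prod_X_pow_mem_ker_aeval_X_pow_iff d a₀ b₀).2 hsum
    · simp only [map_sub, aeval_X_pow_prod_X_pow]

/-- **Lemma.** Let `K = 𝔽_q`, `β` a generator of `Kˣ`, `d i = orderOf (β ^ v i)`.
The substitution `t_i ↦ t_i ^ d i` (which sends `t^a - t^b` to `t^{D a} - t^{D b}`,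
where `(D a) i = d i * a i`) is a bijection from the set of binomials `t^a - t^b` of the
toric ideal `P` whose terms have disjoint support onto the set of binomials
`t^{a'} - t^{b'}` of the vanishing ideal `IX` whose terms have disjoint support. -/
theorem binomial_bijection_toric_to_vanishing
    (K : Type) [Field K] [Fintype K] (n : ℕ) (hn : 2 ≤ n)
    (v : Fin n → ℕ) (hv : ∀ i, 0 < v i)
    (β : Kˣ) (hβ : ∀ x : Kˣ, x ∈ Subgroup.zpowers β)
    (d : Fin n → ℕ) (hd : ∀ i, d i = orderOf (β ^ v i))
    (IX : Ideal (MvPolynomial (Fin n) K))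
    (hIX : IX = Ideal.span {f : MvPolynomial (Fin n) K |
      (∃ e, f.IsHomogeneous e) ∧
      ∀ x : Fin n → Kˣ, eval (fun i => (x i : K) ^ v i) f = 0})
    (P : Ideal (MvPolynomial (Fin n) K))
    (hP : P = RingHom.ker (aeval (fun i : Fin n => (Polynomial.X : Polynomial K) ^ d i) :
      MvPolynomial (Fin n) K →ₐ[K] Polynomial K)) :
    Set.BijOn (fun f => aeval (fun j : Fin n => (X j : MvPolynomial (Fin n) K) ^ d j) f)
      {f : MvPolynomial (Fin n) K | f ∈ P ∧ ∃ a b : Fin n → ℕ,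
        (∀ i, a i = 0 ∨ b i = 0) ∧ f = (∏ i, X i ^ a i) - ∏ i, X i ^ b i}
      {f : MvPolynomial (Fin n) K | f ∈ IX ∧ ∃ a' b' : Fin n → ℕ,
        (∀ i, a' i = 0 ∨ b' i = 0) ∧ f = (∏ i, X i ^ a' i) - ∏ i, X i ^ b' i} :=
  binomial_bijection_toric_to_vanishing_general K n v β hβ d hd IX hIX P hP
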